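/- Let f : ℝ → ℝ be differentiable and x a point such that the Lyapunov exponent μ = lim_{n→∞} (1/n) Σ_{k=0}^{n-1} log|f′(f^{(k)}(x))| exists and is finite. Then for the pure delay map F and the diagonal initial point X = (x,…,x) ∈ ℝ^{τ+1}, the limit lim_{n→∞} (1/n) log‖D(F^{(n)})(X)·v‖ equals μ/(τ+1) for every nonzero tangent vector v. -/

import Mathlib

open Filter in
def pd (f : ℝ → ℝ) (τ : ℕ) (x : Fin (τ + 1) → ℝ) : Fin (τ + 1) → ℝ :=
  fun i => if _h : i.val = 0 then f (x (Fin.last τ)) else x ⟨i.val - 1, by have := i.isLt; omega⟩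

open scoped Fin.NatCast Fin.CommRing

namespace PDaux

open Filter Finset

variable (f : ℝ → ℝ) (τ : ℕ) (x : ℝ)

noncomputable def P (k : ℕ) : ℝ := ∏ i ∈ range k, deriv f (f^[i] x)

noncomputable def S (k : ℕ) : ℝ := ∑ i ∈ range k, Real.log |deriv f (f^[i] x)|

def m (n : ℕ) (i : Fin (τ + 1)) : ℕ := (n + τ - i.val) / (τ + 1)

noncomputable def M (n : ℕ) : (Fin (τ + 1) → ℝ) →L[ℝ] (Fin (τ + 1) → ℝ) :=
  ContinuousLinearMap.pi fun i =>
    P f x (m τ n i) • ContinuousLinearMap.proj (i - (n : Fin (τ + 1)))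

noncomputable def Lmap (y : Fin (τ + 1) → ℝ) : (Fin (τ + 1) → ℝ) →L[ℝ] (Fin (τ + 1) → ℝ) :=
  ContinuousLinearMap.pi fun i =>
    if _h : i.val = 0 then deriv f (y (Fin.last τ)) • ContinuousLinearMap.proj (Fin.last τ)
    else ContinuousLinearMap.proj (⟨i.val - 1, by have := i.isLt; omega⟩ : Fin (τ + 1))

def orb (n : ℕ) : Fin (τ + 1) → ℝ := fun i => f^[m τ n i] x

theorem M_apply (n : ℕ) (v : Fin (τ + 1) → ℝ) (i : Fin (τ + 1)) :
    M f τ x n v i = P f x (m τ n i) * v (i - (n : Fin (τ + 1))) := rfl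

theorem orb_eq (n : ℕ) : (pd f τ)^[n] (fun _ => x) = orb f τ x n := by
  induction n with
  | zero =>
    funext i
    simp only [Function.iterate_zero, id, orb, m]
    rw [Nat.div_eq_of_lt (by omega), Function.iterate_zero, id]
  | succ n ih =>
    funext i
    rw [Function.iterate_succ_apply', ih]
    by_cases hi : i.val = 0
    · simp only [pd, dif_pos hi, orb, m, Fin.val_last]
      rw [show n + τ - τ = n from by omega,
        show n + 1 + τ - i.val = n + (τ + 1) from by omega,
        Nat.add_div_right _ (by omega)]
      exact (Function.iterate_succ_apply' f _ x).symm
    · simp only [pd, dif_neg hi, orb, m]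
      have hlt := i.isLt
      rw [show n + 1 + τ - i.val = n + τ - (i.val - 1) from by omega]

theorem hasFDerivAt_pd (hf : Differentiable ℝ f) (y : Fin (τ + 1) → ℝ) :
    HasFDerivAt (pd f τ) (Lmap f τ y) y := by
  rw [show pd f τ = fun z (i : Fin (τ + 1)) => pd f τ z i from rfl]
  apply hasFDerivAt_pi.2
  intro i
  by_cases hi : i.val = 0
  · simp only [pd, Lmap, dif_pos hi]
    exact ((hf (y (Fin.last τ))).hasDerivAt).comp_hasFDerivAt y
      (ContinuousLinearMap.proj (Fin.last τ) : (Fin (τ + 1) → ℝ) →L[ℝ] ℝ).hasFDerivAt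
  · simp only [pd, Lmap, dif_neg hi]
    exact (ContinuousLinearMap.proj (⟨i.val - 1, by have := i.isLt; omega⟩ : Fin (τ + 1)) :
      (Fin (τ + 1) → ℝ) →L[ℝ] ℝ).hasFDerivAt

theorem hasFDerivAt_iterate (hf : Differentiable ℝ f) (n : ℕ) :
    HasFDerivAt ((pd f τ)^[n]) (M f τ x n) (fun _ => x) := by
  induction n with
  | zero =>
    have : M f τ x 0 = ContinuousLinearMap.id ℝ (Fin (τ + 1) → ℝ) := by
      apply ContinuousLinearMap.ext
      intro v
      funext i
      rw [M_apply]
      simp only [ContinuousLinearMap.id_apply]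
      have hm0 : m τ 0 i = 0 := Nat.div_eq_of_lt (by omega)
      rw [hm0, show P f x 0 = 1 from Finset.prod_range_zero _,
        Nat.cast_zero, sub_zero, one_mul]
    rw [this]
    exact hasFDerivAt_id _
  | succ n ih =>
    rw [Function.iterate_succ']
    have hc := (hasFDerivAt_pd f τ hf ((pd f τ)^[n] (fun _ => x))).comp (fun _ => x) ih
    refine hc.congr_fderiv ?_
    symm
    rw [orb_eq f τ x n]
    -- show M (n+1) = (Lmap (orb n)).comp (M n)
    apply ContinuousLinearMap.ext
    intro v
    funext i
    rw [ContinuousLinearMap.comp_apply, M_apply]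
    by_cases hi : i.val = 0
    · simp only [Lmap, ContinuousLinearMap.pi_apply, dif_pos hi,
        ContinuousLinearMap.smul_apply, ContinuousLinearMap.proj_apply, smul_eq_mul,
        M_apply, orb]
      have hm1 : m τ (n + 1) i = n / (τ + 1) + 1 := by
        simp only [m, hi]
        rw [show n + 1 + τ - 0 = n + (τ + 1) from by omega, Nat.add_div_right _ (by omega)]
      have hm2 : m τ n (Fin.last τ) = n / (τ + 1) := by
        simp only [m, Fin.val_last]
        rw [show n + τ - τ = n from by omega]
      have hP : P f x (n / (τ + 1) + 1) = P f x (n / (τ + 1)) * deriv f (f^[n / (τ + 1)] x) := by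
        simp [P, Finset.prod_range_succ]
      have hfin : i - ((n + 1 : ℕ) : Fin (τ + 1)) = Fin.last τ - (n : Fin (τ + 1)) := by
        have hi0 : i = 0 := Fin.ext hi
        have hlast : (Fin.last τ : Fin (τ + 1)) = -1 := by
          rw [eq_neg_iff_add_eq_zero]
          apply Fin.ext
          rw [Fin.add_def]
          simp [Fin.val_last]
        rw [hi0, hlast]
        push_cast
        ring
      rw [hm1, hm2, hP, hfin]
      ring
    · simp only [Lmap, ContinuousLinearMap.pi_apply, dif_neg hi,
        ContinuousLinearMap.proj_apply, M_apply]
      have hlt := i.isLt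
      have hm : m τ (n + 1) i = m τ n ⟨i.val - 1, by omega⟩ := by
        simp only [m]
        congr 1
        omega
      have hfin : i - ((n : ℕ) + 1 : ℕ) = (⟨i.val - 1, by omega⟩ : Fin (τ + 1)) - (n : Fin (τ + 1)) := by
        have h1 : (⟨i.val - 1, by omega⟩ : Fin (τ + 1)) = i - 1 := by
          apply Fin.ext
          rw [Fin.coe_sub_one, if_neg (fun h => hi (by rw [h]; rfl))]
        rw [h1]
        push_cast
        ring
      rw [hm, hfin]

theorem abs_P_pos (hne : ∀ k, deriv f (f^[k] x) ≠ 0) (k : ℕ) : 0 < |P f x k| := by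
  rw [abs_pos]
  exact Finset.prod_ne_zero_iff.2 fun i _ => hne i

theorem log_abs_P (hne : ∀ k, deriv f (f^[k] x) ≠ 0) (k : ℕ) :
    Real.log |P f x k| = S f x k := by
  unfold P S
  rw [Finset.abs_prod, Real.log_prod (fun i _ => abs_ne_zero.2 (hne i))]

theorem m_range (n : ℕ) (i : Fin (τ + 1)) :
    m τ n i = n / (τ + 1) ∨ m τ n i = n / (τ + 1) + 1 := by
  have hqr := Nat.div_add_mod n (τ + 1)
  have hr : n % (τ + 1) < τ + 1 := Nat.mod_lt _ (by omega)
  have hi := i.isLt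
  have h1 : m τ n i = n / (τ + 1) + (n % (τ + 1) + τ - i.val) / (τ + 1) := by
    unfold m
    rw [show n + τ - i.val = (τ + 1) * (n / (τ + 1)) + (n % (τ + 1) + τ - i.val) from by omega,
      Nat.mul_add_div (by omega)]
  have h2 : (n % (τ + 1) + τ - i.val) / (τ + 1) < 2 := by
    rw [Nat.div_lt_iff_lt_mul (by omega)]
    omega
  rcases Nat.le_one_iff_eq_zero_or_eq_one.1 (Nat.le_of_lt_succ h2) with h | h
  · exact Or.inl (by rw [h1, h, Nat.add_zero])
  · exact Or.inr (by rw [h1, h])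

theorem div_aux (d q s : ℕ) (hd : 0 < d) (hs : s < d) : (d * q + s) / d = q := by
  rw [Nat.mul_add_div hd, Nat.div_eq_of_lt hs, add_zero]

theorem m_reindex (n : ℕ) (j : Fin (τ + 1)) :
    m τ n (j + (n : Fin (τ + 1))) = (n + j.val) / (τ + 1) := by
  have hval : (j + (n : Fin (τ + 1))).val = (j.val + n % (τ + 1)) % (τ + 1) := by
    rw [Fin.add_def, Fin.val_natCast]
  unfold m
  rw [hval]
  have hqr := Nat.div_add_mod n (τ + 1)
  have hr : n % (τ + 1) < τ + 1 := Nat.mod_lt _ (by omega)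
  have hj := j.isLt
  by_cases h : j.val + n % (τ + 1) < τ + 1
  · rw [Nat.mod_eq_of_lt h]
    rw [show n + τ - (j.val + n % (τ + 1)) = (τ + 1) * (n / (τ + 1)) + (τ - j.val) from by omega]
    rw [div_aux (τ + 1) (n / (τ + 1)) (τ - j.val) (by omega) (by omega)]
    rw [show n + j.val = (τ + 1) * (n / (τ + 1)) + (n % (τ + 1) + j.val) from by omega]
    rw [div_aux (τ + 1) (n / (τ + 1)) (n % (τ + 1) + j.val) (by omega) (by omega)]
  · have h2 : (j.val + n % (τ + 1)) % (τ + 1) = j.val + n % (τ + 1) - (τ + 1) := by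
      rw [Nat.mod_eq_sub_mod (by omega), Nat.mod_eq_of_lt (by omega)]
    rw [h2]
    rw [show n + τ - (j.val + n % (τ + 1) - (τ + 1)) = (τ + 1) * (n / (τ + 1) + 1) + (τ - j.val)
        from by
          have hmul : (τ + 1) * (n / (τ + 1) + 1) = (τ + 1) * (n / (τ + 1)) + (τ + 1) := by ring
          omega]
    rw [div_aux (τ + 1) (n / (τ + 1) + 1) (τ - j.val) (by omega) (by omega)]
    rw [show n + j.val = (τ + 1) * (n / (τ + 1) + 1) + (j.val + n % (τ + 1) - (τ + 1))
        from by
          have hmul : (τ + 1) * (n / (τ + 1) + 1) = (τ + 1) * (n / (τ + 1)) + (τ + 1) := by ring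
          omega]
    rw [div_aux (τ + 1) (n / (τ + 1) + 1) (j.val + n % (τ + 1) - (τ + 1)) (by omega) (by omega)]

theorem log_max (a b : ℝ) (ha : 0 < a) (hb : 0 < b) :
    Real.log (max a b) = max (Real.log a) (Real.log b) := by
  rcases le_total a b with h | h
  · rw [max_eq_right h, max_eq_right (Real.log_le_log ha h)]
  · rw [max_eq_left h, max_eq_left (Real.log_le_log hb h)]

theorem lim_c (τ : ℕ) (μ : ℝ)
    (hμ : Tendsto (fun n : ℕ => (1 / (n : ℝ)) * S f x n) atTop (nhds μ)) (c : ℕ) :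
    Tendsto (fun n : ℕ => S f x ((n + c) / (τ + 1)) / (n : ℝ)) atTop
      (nhds (μ / ((τ : ℝ) + 1))) := by
  set k : ℕ → ℕ := fun n => (n + c) / (τ + 1) with hk_def
  have hk : Tendsto k atTop atTop := by
    rw [tendsto_atTop_atTop]
    intro b
    exact ⟨b * (τ + 1), fun n hn => (Nat.le_div_iff_mul_le (by omega)).2 (by omega)⟩
  have hTk : Tendsto (fun n : ℕ => (1 / (k n : ℝ)) * S f x (k n)) atTop (nhds μ) := hμ.comp hk
  have hcast : ∀ n : ℕ, ((k n : ℕ) : ℝ) * ((τ : ℝ) + 1) ≤ (n : ℝ) + c := by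
    intro n
    have h1 : k n * (τ + 1) ≤ n + c := by
      show (n + c) / (τ + 1) * (τ + 1) ≤ n + c
      exact Nat.div_mul_le_self _ _
    calc ((k n : ℕ) : ℝ) * ((τ : ℝ) + 1) = ((k n * (τ + 1) : ℕ) : ℝ) := by push_cast; ring
    _ ≤ ((n + c : ℕ) : ℝ) := by exact_mod_cast h1
    _ = (n : ℝ) + c := by push_cast; ring
  have hcast2 : ∀ n : ℕ, (n : ℝ) + c < ((k n : ℕ) : ℝ) * ((τ : ℝ) + 1) + ((τ : ℝ) + 1) := by
    intro n
    have h1 : n + c < (τ + 1) * k n + (τ + 1) := by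
      show n + c < (τ + 1) * ((n + c) / (τ + 1)) + (τ + 1)
      have h2 : (τ + 1) * ((n + c) / (τ + 1)) + (n + c) % (τ + 1) = n + c :=
        Nat.div_add_mod _ _
      have h3 : (n + c) % (τ + 1) < τ + 1 := Nat.mod_lt _ (by omega)
      omega
    calc (n : ℝ) + c = ((n + c : ℕ) : ℝ) := by push_cast; ring
    _ < (((τ + 1) * k n + (τ + 1) : ℕ) : ℝ) := by exact_mod_cast h1
    _ = _ := by push_cast; ring
  have hG2 : Tendsto (fun n : ℕ => ((n : ℝ) + c) / (((τ : ℝ) + 1) * n)) atTop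
      (nhds (1 / ((τ : ℝ) + 1))) := by
    have h := ((tendsto_one_div_atTop_nhds_zero_nat.const_mul ((c : ℝ))).const_add 1).mul_const
      (1 / ((τ : ℝ) + 1))
    rw [mul_zero, add_zero, one_mul] at h
    apply h.congr'
    filter_upwards [eventually_ge_atTop 1] with n hn
    have hn0 : (0 : ℝ) < n := by exact_mod_cast hn
    have hn' : (n : ℝ) ≠ 0 := ne_of_gt hn0
    field_simp
    try ring
    try exact Or.inl trivial
  have hG1 : Tendsto (fun n : ℕ => ((n : ℝ) + c - ((τ : ℝ) + 1)) / (((τ : ℝ) + 1) * n)) atTop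
      (nhds (1 / ((τ : ℝ) + 1))) := by
    have h := ((tendsto_one_div_atTop_nhds_zero_nat.const_mul ((c : ℝ) - ((τ : ℝ) + 1))).const_add
      1).mul_const (1 / ((τ : ℝ) + 1))
    rw [mul_zero, add_zero, one_mul] at h
    apply h.congr'
    filter_upwards [eventually_ge_atTop 1] with n hn
    have hn0 : (0 : ℝ) < n := by exact_mod_cast hn
    have hn' : (n : ℝ) ≠ 0 := ne_of_gt hn0
    field_simp
    try ring
    try exact Or.inl trivial
  have hratio : Tendsto (fun n : ℕ => ((k n : ℕ) : ℝ) / n) atTop (nhds (1 / ((τ : ℝ) + 1))) := by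
    apply tendsto_of_tendsto_of_tendsto_of_le_of_le' hG1 hG2
    · filter_upwards [eventually_ge_atTop 1] with n hn
      have hn0 : (0 : ℝ) < n := by exact_mod_cast hn
      rw [div_le_div_iff₀ (by positivity) hn0]
      nlinarith [hcast2 n]
    · filter_upwards [eventually_ge_atTop 1] with n hn
      have hn0 : (0 : ℝ) < n := by exact_mod_cast hn
      rw [div_le_div_iff₀ hn0 (by positivity)]
      nlinarith [hcast n]
  have hmul := hTk.mul hratio
  rw [mul_one_div] at hmul
  apply hmul.congr'
  filter_upwards [hk.eventually_ge_atTop 1, eventually_ge_atTop 1] with n hn hn1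
  have hkn0 : ((k n : ℕ) : ℝ) ≠ 0 := Nat.cast_ne_zero.2 (by omega)
  have hn' : (n : ℝ) ≠ 0 := Nat.cast_ne_zero.2 (by omega)
  field_simp
  try ring

end PDaux

open Filter Finset in
/-- If the Lyapunov exponent of f at x is μ, then every Lyapunov exponent of the
pure delay system at the diagonal point is μ/(τ+1). -/
theorem pd_lyapunov_rescaling (f : ℝ → ℝ) (hf : Differentiable ℝ f) (τ : ℕ)
    (x : ℝ) (hne : ∀ k, deriv f (f^[k] x) ≠ 0) (μ : ℝ)
    (hμ : Tendsto (fun n : ℕ =>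
        (1 / (n : ℝ)) * ∑ k ∈ range n, Real.log |deriv f (f^[k] x)|)
      atTop (nhds μ))
    (v : Fin (τ + 1) → ℝ) (hv : v ≠ 0) :
    Tendsto (fun n : ℕ =>
        (1 / (n : ℝ)) * Real.log ‖fderiv ℝ ((pd f τ)^[n]) (fun _ => x) v‖)
      atTop (nhds (μ / (τ + 1))) := by
  obtain ⟨j0, hj0⟩ := Function.ne_iff.1 hv
  have hμ' : Tendsto (fun n : ℕ => (1 / (n : ℝ)) * PDaux.S f x n) atTop (nhds μ) := hμ
  have hA : Tendsto (fun n : ℕ => PDaux.S f x ((n + j0.val) / (τ + 1)) / (n : ℝ)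
      + Real.log |v j0| * (1 / (n : ℝ))) atTop (nhds (μ / ((τ : ℝ) + 1))) := by
    have h := (PDaux.lim_c f x τ μ hμ' j0.val).add
      (tendsto_one_div_atTop_nhds_zero_nat.const_mul (Real.log |v j0|))
    rw [mul_zero, add_zero] at h
    exact h
  have hB1 : Tendsto (fun n : ℕ => PDaux.S f x (n / (τ + 1)) / (n : ℝ)) atTop
      (nhds (μ / ((τ : ℝ) + 1))) :=
    (PDaux.lim_c f x τ μ hμ' 0).congr (fun n => by rw [Nat.add_zero])
  have hB2 : Tendsto (fun n : ℕ => PDaux.S f x (n / (τ + 1) + 1) / (n : ℝ)) atTop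
      (nhds (μ / ((τ : ℝ) + 1))) :=
    (PDaux.lim_c f x τ μ hμ' (τ + 1)).congr
      (fun n => by rw [Nat.add_div_right _ (by omega)])
  have hB : Tendsto (fun n : ℕ =>
      max (PDaux.S f x (n / (τ + 1)) / (n : ℝ)) (PDaux.S f x (n / (τ + 1) + 1) / (n : ℝ))
        + Real.log ‖v‖ * (1 / (n : ℝ))) atTop (nhds (μ / ((τ : ℝ) + 1))) := by
    have h := (hB1.max hB2).add
      (tendsto_one_div_atTop_nhds_zero_nat.const_mul (Real.log ‖v‖))
    rw [mul_zero, add_zero, max_self] at h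
    exact h
  apply tendsto_of_tendsto_of_tendsto_of_le_of_le' hA hB
  · -- lower bound
    filter_upwards [eventually_ge_atTop 1] with n hn
    have hn0 : (0 : ℝ) < n := by exact_mod_cast hn
    have hfd : fderiv ℝ ((pd f τ)^[n]) (fun _ => x) = PDaux.M f τ x n :=
      (PDaux.hasFDerivAt_iterate f τ x hf n).fderiv
    rw [hfd]
    have hMv : PDaux.M f τ x n v (j0 + (n : Fin (τ + 1)))
        = PDaux.P f x ((n + j0.val) / (τ + 1)) * v j0 := by
      rw [PDaux.M_apply, PDaux.m_reindex, add_sub_cancel_right]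
    have hle : |PDaux.P f x ((n + j0.val) / (τ + 1))| * |v j0| ≤ ‖PDaux.M f τ x n v‖ := by
      have h := norm_le_pi_norm (PDaux.M f τ x n v) (j0 + (n : Fin (τ + 1)))
      rwa [Real.norm_eq_abs, hMv, abs_mul] at h
    have hpos : 0 < |PDaux.P f x ((n + j0.val) / (τ + 1))| * |v j0| :=
      mul_pos (PDaux.abs_P_pos f x hne _) (abs_pos.2 hj0)
    have hlog : PDaux.S f x ((n + j0.val) / (τ + 1)) + Real.log |v j0|
        ≤ Real.log ‖PDaux.M f τ x n v‖ := by
      have h := Real.log_le_log hpos hle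
      rwa [Real.log_mul (ne_of_gt (PDaux.abs_P_pos f x hne _)) (abs_ne_zero.2 hj0),
        PDaux.log_abs_P f x hne] at h
    calc PDaux.S f x ((n + j0.val) / (τ + 1)) / (n : ℝ) + Real.log |v j0| * (1 / (n : ℝ))
        = (1 / (n : ℝ)) * (PDaux.S f x ((n + j0.val) / (τ + 1)) + Real.log |v j0|) := by ring
      _ ≤ (1 / (n : ℝ)) * Real.log ‖PDaux.M f τ x n v‖ :=
          mul_le_mul_of_nonneg_left hlog (by positivity)
  · -- upper bound
    filter_upwards [eventually_ge_atTop 1] with n hn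
    have hn0 : (0 : ℝ) < n := by exact_mod_cast hn
    have hfd : fderiv ℝ ((pd f τ)^[n]) (fun _ => x) = PDaux.M f τ x n :=
      (PDaux.hasFDerivAt_iterate f τ x hf n).fderiv
    rw [hfd]
    have hMv : PDaux.M f τ x n v (j0 + (n : Fin (τ + 1)))
        = PDaux.P f x ((n + j0.val) / (τ + 1)) * v j0 := by
      rw [PDaux.M_apply, PDaux.m_reindex, add_sub_cancel_right]
    have hle : |PDaux.P f x ((n + j0.val) / (τ + 1))| * |v j0| ≤ ‖PDaux.M f τ x n v‖ := by
      have h := norm_le_pi_norm (PDaux.M f τ x n v) (j0 + (n : Fin (τ + 1)))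
      rwa [Real.norm_eq_abs, hMv, abs_mul] at h
    have hpos : 0 < |PDaux.P f x ((n + j0.val) / (τ + 1))| * |v j0| :=
      mul_pos (PDaux.abs_P_pos f x hne _) (abs_pos.2 hj0)
    have hwpos : 0 < ‖PDaux.M f τ x n v‖ := lt_of_lt_of_le hpos hle
    have hmaxpos : 0 < max |PDaux.P f x (n / (τ + 1))| |PDaux.P f x (n / (τ + 1) + 1)| :=
      lt_of_lt_of_le (PDaux.abs_P_pos f x hne (n / (τ + 1))) (le_max_left _ _)
    have hub : ‖PDaux.M f τ x n v‖
        ≤ max |PDaux.P f x (n / (τ + 1))| |PDaux.P f x (n / (τ + 1) + 1)| * ‖v‖ := by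
      apply (pi_norm_le_iff_of_nonneg (by positivity)).2
      intro i
      rw [Real.norm_eq_abs, PDaux.M_apply, abs_mul]
      have hvle : |v (i - (n : Fin (τ + 1)))| ≤ ‖v‖ := by
        have h := norm_le_pi_norm v (i - (n : Fin (τ + 1)))
        rwa [Real.norm_eq_abs] at h
      have hPle : |PDaux.P f x (PDaux.m τ n i)|
          ≤ max |PDaux.P f x (n / (τ + 1))| |PDaux.P f x (n / (τ + 1) + 1)| := by
        rcases PDaux.m_range τ n i with h | h
        · rw [h]; exact le_max_left _ _
        · rw [h]; exact le_max_right _ _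
      exact mul_le_mul hPle hvle (abs_nonneg _) hmaxpos.le
    have hlog : Real.log ‖PDaux.M f τ x n v‖
        ≤ max (PDaux.S f x (n / (τ + 1))) (PDaux.S f x (n / (τ + 1) + 1)) + Real.log ‖v‖ := by
      have h := Real.log_le_log hwpos hub
      rwa [Real.log_mul (ne_of_gt hmaxpos) (norm_ne_zero_iff.2 hv),
        PDaux.log_max _ _ (PDaux.abs_P_pos f x hne (n / (τ + 1)))
          (PDaux.abs_P_pos f x hne (n / (τ + 1) + 1)),
        PDaux.log_abs_P f x hne, PDaux.log_abs_P f x hne] at h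
    calc (1 / (n : ℝ)) * Real.log ‖PDaux.M f τ x n v‖
        ≤ (1 / (n : ℝ)) * (max (PDaux.S f x (n / (τ + 1))) (PDaux.S f x (n / (τ + 1) + 1))
            + Real.log ‖v‖) := mul_le_mul_of_nonneg_left hlog (by positivity)
      _ = max (PDaux.S f x (n / (τ + 1)) / (n : ℝ)) (PDaux.S f x (n / (τ + 1) + 1) / (n : ℝ))
            + Real.log ‖v‖ * (1 / (n : ℝ)) := by
          rw [mul_add, mul_max_of_nonneg _ _ (by positivity : (0 : ℝ) ≤ 1 / (n : ℝ)),
            one_div_mul_eq_div, one_div_mul_eq_div]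
          ring_nf
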